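/- Let N be a finite index set, b ∈ ℕ with |N| ≥ b + 1, (λ̌_j)_{j∈N} vectors in a real inner product space, B ⊆ N with |B| ≤ b, and let C be the (b+1)-th largest element of the multiset of norms {‖λ̌_j‖ : j ∈ N} (sorted in nonincreasing order, with multiplicity). Let λ_i be a further vector (the agent's own dual variable), τ ≥ 0 a clipping threshold, and (ẽ_j)_{j∈N∪{i}} nonnegative weights with Σ_{j∈N∪{i}} ẽ_j ≤ 1. For each j ∈ N∪{i} define v_j := min(1, τ/‖clip_C(λ̌_j) − λ_i‖)·(clip_C(λ̌_j) − λ_i) (with v_j := 0 when clip_C(λ̌_j) = λ_i, and with λ̌_i := λ_i). Then the SCC(ARC) output satisfies ‖Σ_{j∈N∪{i}} ẽ_j (λ_i + v_j)‖ ≤ max over j' ∈ (N∖B)∪{i} of ‖λ̌_{j'}‖. -/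

import Mathlib

/-!
Each summand `λᵢ + clip_τ (clip_C λ̌ⱼ - λᵢ)` lies on the segment from `λᵢ` to `clip_C λ̌ⱼ`, so by
convexity of the norm it is bounded by `max ‖λᵢ‖ ‖clip_C λ̌ⱼ‖`, and a combination with nonnegative
weights of total mass at most one inherits any such bound. Clipping never increases norms, which
settles the benign neighbours; a Byzantine neighbour is clipped to norm at most `C`, and `C` is
itself at most some benign norm, since at least `b + 1` neighbours have norm `≥ C` and at most `b`
of them are Byzantine.
-/

/-- The clipping operator `clip_C(v) = min(1, C/‖v‖)·v` (with `clip_C(0) = 0`,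
since in Lean `C/0 = 0`). -/
noncomputable def clip {E : Type*} [NormedAddCommGroup E] [InnerProductSpace ℝ E]
    (C : ℝ) (v : E) : E := min 1 (C / ‖v‖) • v

namespace Multiset

variable {α : Type*} [LinearOrder α]

theorem sort_getD_mem {s : Multiset α} {k : ℕ} (hk : k < card s) (d : α) :
    (s.sort (· ≤ ·)).getD k d ∈ s := by
  rw [← mem_sort (· ≤ ·), List.getD_eq_getElem _ _ (by rwa [length_sort])]
  exact List.getElem_mem _

theorem card_sub_le_countP_sort_getD_le {s : Multiset α} {k : ℕ} (hk : k < card s) (d : α) :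
    card s - k ≤ s.countP ((s.sort (· ≤ ·)).getD k d ≤ ·) := by
  set l := s.sort (· ≤ ·)
  have hkl : k < l.length := by rwa [length_sort]
  have hdrop : ∀ x ∈ l.drop k, l.getD k d ≤ x := by
    intro x hx
    obtain ⟨n, hn, rfl⟩ := List.mem_iff_getElem.1 hx
    rw [List.getElem_drop, List.getD_eq_getElem _ _ hkl]
    have hkn : k + n < l.length := by rw [List.length_drop] at hn; omega
    exact (pairwise_sort s _).rel_get_of_le (a := ⟨k, hkl⟩) (b := ⟨k + n, hkn⟩) (by simp)
  calc card s - k = (l.drop k).length := by rw [List.length_drop, length_sort]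
    _ = (l.drop k).countP (l.getD k d ≤ ·) := (List.countP_eq_length.2 (by simpa using hdrop)).symm
    _ ≤ l.countP (l.getD k d ≤ ·) := (List.drop_sublist _ _).countP_le
    _ = s.countP (l.getD k d ≤ ·) := by rw [← coe_countP, sort_eq]

end Multiset

namespace Finset

variable {ι α : Type*} [LinearOrder α]

theorem exists_mem_sdiff_sort_getD_le [DecidableEq ι] {s t : Finset ι} {b : ℕ}
    (hs : b + 1 ≤ #s) (ht : #t ≤ b) (f : ι → α) (d : α) :
    ∃ j ∈ s \ t, ((s.val.map f).sort (· ≤ ·)).getD (#s - 1 - b) d ≤ f j := by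
  set c := ((s.val.map f).sort (· ≤ ·)).getD (#s - 1 - b) d
  have hcount : b + 1 ≤ #{j ∈ s | c ≤ f j} := by
    have h := Multiset.card_sub_le_countP_sort_getD_le (s := s.val.map f) (k := #s - 1 - b)
      (by rw [Multiset.card_map, card_val]; omega) d
    rw [Multiset.countP_map, Multiset.card_map, card_val] at h
    change #s - (#s - 1 - b) ≤ #{j ∈ s | c ≤ f j} at h
    omega
  obtain ⟨j, hj⟩ : ({j ∈ s | c ≤ f j} \ t).Nonempty := by
    rw [← card_pos]; have := le_card_sdiff t {j ∈ s | c ≤ f j}; omega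
  simp only [mem_sdiff, mem_filter] at hj
  exact ⟨j, mem_sdiff.2 ⟨hj.1.1, hj.2⟩, hj.1.2⟩

end Finset

section Clip

variable {E : Type*} [NormedAddCommGroup E] [InnerProductSpace ℝ E]

theorem norm_clip {C : ℝ} (hC : 0 ≤ C) (v : E) : ‖clip C v‖ = min ‖v‖ C := by
  rw [clip, norm_smul, Real.norm_of_nonneg (le_min zero_le_one (by positivity)),
    min_mul_of_nonneg _ _ (norm_nonneg v), one_mul]
  rcases (norm_nonneg v).eq_or_lt with hv | hv
  · simp [← hv, hC]
  · rw [div_mul_cancel₀ C hv.ne']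

theorem norm_add_clip_sub_le_max {τ : ℝ} (hτ : 0 ≤ τ) (x w : E) :
    ‖x + clip τ (w - x)‖ ≤ max ‖x‖ ‖w‖ := by
  set t := min 1 (τ / ‖w - x‖)
  have ht : x + clip τ (w - x) = (1 - t) • x + t • w := by rw [clip]; module
  rw [ht]
  exact (convexOn_norm convex_univ).le_on_segment' trivial trivial
    (sub_nonneg.2 (min_le_left _ _)) (le_min zero_le_one (by positivity)) (by ring)

end Clip

theorem norm_sum_smul_le_of_norm_le {ι E : Type*} [SeminormedAddCommGroup E] [NormedSpace ℝ E]
    {s : Finset ι} {e : ι → ℝ} {v : ι → E} {M : ℝ} (he : ∀ j ∈ s, 0 ≤ e j)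
    (hesum : ∑ j ∈ s, e j ≤ 1) (hv : ∀ j ∈ s, ‖v j‖ ≤ M) (hM : 0 ≤ M) :
    ‖∑ j ∈ s, e j • v j‖ ≤ M :=
  calc ‖∑ j ∈ s, e j • v j‖ ≤ ∑ j ∈ s, ‖e j • v j‖ := norm_sum_le _ _
    _ ≤ ∑ j ∈ s, e j * M := Finset.sum_le_sum fun j hj => by
        rw [norm_smul, Real.norm_of_nonneg (he j hj)]
        exact mul_le_mul_of_nonneg_left (hv j hj) (he j hj)
    _ = (∑ j ∈ s, e j) * M := (Finset.sum_mul _ _ _).symm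
    _ ≤ M := mul_le_of_le_one_left hM hesum

theorem scc_arc_norm_bound_general
    {E : Type*} [NormedAddCommGroup E] [InnerProductSpace ℝ E]
    {ι : Type*} [DecidableEq ι]
    (N : Finset ι) (b : ℕ) (hNb : b + 1 ≤ N.card)
    (lamc : ι → E)
    (B : Finset ι) (hB : B.card ≤ b)
    (C : ℝ)
    (hC : C = ((N.val.map fun j => ‖lamc j‖).sort (· ≤ ·)).getD
        (N.card - 1 - b) 0)
    (i : ι)
    (τ : ℝ) (hτ : 0 ≤ τ)
    (e : ι → ℝ) (he : ∀ j ∈ insert i N, 0 ≤ e j)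
    (hesum : ∑ j ∈ insert i N, e j ≤ 1) :
    ‖∑ j ∈ insert i N, e j •
        (lamc i
          + min 1 (τ / ‖clip C (lamc j) - lamc i‖) • (clip C (lamc j) - lamc i))‖
      ≤ sSup ((fun j' => ‖lamc j'‖) '' ((insert i (N \ B) : Finset ι) : Set ι)) := by
  set M := sSup ((fun j' => ‖lamc j'‖) '' ((insert i (N \ B) : Finset ι) : Set ι))
  have hM : ∀ j ∈ insert i (N \ B), ‖lamc j‖ ≤ M := fun j hj =>
    le_csSup ((Finset.finite_toSet _).image _).bddAbove (Set.mem_image_of_mem _ hj)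
  have hiM : ‖lamc i‖ ≤ M := hM i (Finset.mem_insert_self _ _)
  have hC0 : 0 ≤ C := by
    obtain ⟨j, -, hj⟩ := Multiset.mem_map.1 (hC ▸ Multiset.sort_getD_mem
      (by rw [Multiset.card_map, Finset.card_val]; omega) 0)
    exact hj ▸ norm_nonneg _
  have hCM : C ≤ M := by
    obtain ⟨j, hj, hCj⟩ := Finset.exists_mem_sdiff_sort_getD_le hNb hB (‖lamc ·‖) 0
    exact hC ▸ hCj.trans (hM j (Finset.mem_insert_of_mem hj))
  refine norm_sum_smul_le_of_norm_le he hesum (fun j hj => ?_) ((norm_nonneg _).trans hiM)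
  refine (norm_add_clip_sub_le_max hτ _ _).trans (max_le hiM ?_)
  rw [norm_clip hC0]
  by_cases hjB : j ∈ insert i (N \ B)
  · exact (min_le_left _ _).trans (hM j hjB)
  · exact (min_le_right _ _).trans hCM

/-- **The self-centered clipping rule SCC composed with adaptive robust
clipping ARC satisfies the norm condition (Property 2):** the output norm is
bounded by the maximal norm among the agent's own dual variable `lamc i` and
the benign neighbors' dual variables. -/
theorem scc_arc_norm_bound
    {E : Type*} [NormedAddCommGroup E] [InnerProductSpace ℝ E]
    {ι : Type*} [DecidableEq ι]
    (N : Finset ι) (b : ℕ) (hNb : b + 1 ≤ N.card)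
    (lamc : ι → E)
    (B : Finset ι) (hBN : B ⊆ N) (hB : B.card ≤ b)
    (C : ℝ)
    (hC : C = ((N.val.map fun j => ‖lamc j‖).sort (· ≤ ·)).getD
        (N.card - 1 - b) 0)
    (i : ι) (hi : i ∉ N)
    (τ : ℝ) (hτ : 0 ≤ τ)
    (e : ι → ℝ) (he : ∀ j ∈ insert i N, 0 ≤ e j)
    (hesum : ∑ j ∈ insert i N, e j ≤ 1) :
    ‖∑ j ∈ insert i N, e j •
        (lamc i
          + min 1 (τ / ‖clip C (lamc j) - lamc i‖) • (clip C (lamc j) - lamc i))‖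
      ≤ sSup ((fun j' => ‖lamc j'‖) '' ((insert i (N \ B) : Finset ι) : Set ι)) :=
  scc_arc_norm_bound_general N b hNb lamc B hB C hC i τ hτ e he hesum
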